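/- Let y ∈ (ω)^ω and suppose (y)^k = ⋃_{i<ℓ} C_i is a 1-reduced coloring, i.e., the color of p ∈ (y)^k depends only on μ^p(1). Then there exist z ∈ (y)^ω and i < ℓ such that (z)^k ⊆ C_i. (The final pigeonhole step of the classical proof of CDRT^k_ℓ.) -/

import Mathlib

open Set

/-- `f : ℕ → ℕ` is ordered: a value `i` can occur only after all `j < i` have occurred. -/
def IsOrderedFn (f : ℕ → ℕ) : Prop :=
  ∀ n i, f n = i → ∀ j < i, ∃ m < n, f m = j

/-- `(ω)^k`: ordered surjections from `ω` onto `k`. -/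
def OmegaPart (k : ℕ) : Set (ℕ → ℕ) :=
  {f | IsOrderedFn f ∧ (∀ n, f n < k) ∧ ∀ i < k, ∃ n, f n = i}

/-- `(ω)^ω`: ordered surjections from `ω` onto `ω` (infinite partitions). -/
def OmegaPartInf : Set (ℕ → ℕ) :=
  {f | IsOrderedFn f ∧ Function.Surjective f}

/-- `(p)^k`: the `k`-coarsenings of `p`. -/
def Coarsenings (p : ℕ → ℕ) (k : ℕ) : Set (ℕ → ℕ) :=
  {q | q ∈ OmegaPart k ∧ ∀ n m, p n = p m → q n = q m}

/-- `(p)^ω`: the infinite coarsenings of `p`. -/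
def CoarseningsInf (p : ℕ → ℕ) : Set (ℕ → ℕ) :=
  {q | q ∈ OmegaPartInf ∧ ∀ n m, p n = p m → q n = q m}

/-- `μ^x(i)`: the least `n` with `x n = i`. -/
noncomputable def mu (x : ℕ → ℕ) (i : ℕ) : ℕ := sInf {n | x n = i}

/-- `x ↾ n` as a finite string. -/
def restrictList (x : ℕ → ℕ) (n : ℕ) : List ℕ := (List.range n).map x

/-- The basic (cylinder) set `[σ]` of functions extending the finite string `σ`. -/
def Cyl (σ : List ℕ) : Set (ℕ → ℕ) := {x | ∀ n < σ.length, x n = σ.getD n 0}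

/-- A finite string is ordered. -/
def ListOrdered (σ : List ℕ) : Prop :=
  ∀ n < σ.length, ∀ j < σ.getD n 0, ∃ m < n, σ.getD m 0 = j

/-- `(ω)^k_fin`: ordered finite strings over `k` in which all `i < k` appear. -/
def OmegaPartFin (k : ℕ) : Set (List ℕ) :=
  {σ | ListOrdered σ ∧ (∀ a ∈ σ, a < k) ∧ ∀ i < k, i ∈ σ}

/-- Composition `σ ∘ τ` of finite strings: `(σ ∘ τ)(n) = σ(τ(n))`. -/
def listComp (σ τ : List ℕ) : List ℕ := τ.map fun n => σ.getD n 0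

/-- `σ'` is a `k`-coarsening of the finite string `τ`. -/
def IsListCoarsening (k : ℕ) (σ' τ : List ℕ) : Prop :=
  σ' ∈ OmegaPartFin k ∧ σ'.length = τ.length ∧
    ∀ n < τ.length, ∀ m < τ.length,
      τ.getD n 0 = τ.getD m 0 → σ'.getD n 0 = σ'.getD m 0

/-- The open set coded by a set `W` of finite strings. -/
def OpenFrom (W : Set (List ℕ)) : Set (ℕ → ℕ) := {x | ∃ σ ∈ W, x ∈ Cyl σ}

/-- Codes for partial recursive functionals with an oracle. -/
inductive OracleCode : Type
  | oracle : OracleCode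
  | zero : OracleCode
  | succ : OracleCode
  | left : OracleCode
  | right : OracleCode
  | pair : OracleCode → OracleCode → OracleCode
  | comp : OracleCode → OracleCode → OracleCode
  | prec : OracleCode → OracleCode → OracleCode
  | rfind' : OracleCode → OracleCode

/-- Evaluation of an oracle code with oracle `g`. -/
def OracleCode.evalo (g : ℕ →. ℕ) : OracleCode → ℕ →. ℕ
  | .oracle => g
  | .zero => fun _ => Part.some 0
  | .succ => fun n => Part.some (n + 1)
  | .left => fun n => Part.some (Nat.unpair n).1
  | .right => fun n => Part.some (Nat.unpair n).2
  | .pair cf cg => fun n => Nat.pair <$> OracleCode.evalo g cf n <*> OracleCode.evalo g cg n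
  | .comp cf cg => fun n => OracleCode.evalo g cg n >>= OracleCode.evalo g cf
  | .prec cf cg =>
      Nat.unpaired fun a n =>
        n.rec (OracleCode.evalo g cf a) fun y IH => do
          let i ← IH
          OracleCode.evalo g cg (Nat.pair a (Nat.pair y i))
  | .rfind' cf =>
      Nat.unpaired fun a m =>
        (Nat.rfind fun n =>
            (fun x => decide (x = 0)) <$> OracleCode.evalo g cf (Nat.pair a (n + m))).map (· + m)

/-- View a total function as a partial function. -/
def toP (f : ℕ → ℕ) : ℕ →. ℕ := fun n => Part.some (f n)

/-- `f` is Turing reducible to `g`. -/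
def TuringReducibleFun (f g : ℕ → ℕ) : Prop :=
  ∃ c : OracleCode, c.evalo (toP g) = toP f

open Classical in
/-- Characteristic function of a set of naturals. -/
noncomputable def chi (A : Set ℕ) : ℕ → ℕ := fun n => if n ∈ A then 1 else 0

/-- A numbering of oracle codes. -/
def OracleCode.encodeC : OracleCode → ℕ
  | .oracle => 0
  | .zero => 1
  | .succ => 2
  | .left => 3
  | .right => 4
  | .pair a b => Nat.pair a.encodeC b.encodeC * 4 + 5
  | .comp a b => Nat.pair a.encodeC b.encodeC * 4 + 6
  | .prec a b => Nat.pair a.encodeC b.encodeC * 4 + 7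
  | .rfind' a => a.encodeC * 4 + 8

/-- The Turing jump of (the characteristic function) `g`. -/
def JumpSet (g : ℕ → ℕ) : Set ℕ :=
  {n | ∃ c : OracleCode, ∃ m, n = Nat.pair c.encodeC m ∧ (c.evalo (toP g) m).Dom}

/-- `∅^{(n)}`: the iterated Turing jump of the empty set. -/
noncomputable def EmptyIter : ℕ → Set ℕ
  | 0 => (∅ : Set ℕ)
  | n + 1 => JumpSet (chi (EmptyIter n))

/-- The clopen set coded by the leaf label `e`: `∅`, `univ`, `[τ_m]`, or its complement. -/
def leafSet (e : ℕ) : Set (ℕ → ℕ) :=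
  if e = 0 then ∅
  else if e = 1 then Set.univ
  else if e % 2 = 0 then Cyl (Denumerable.ofNat (List ℕ) (e / 2 - 1))
  else (Cyl (Denumerable.ofNat (List ℕ) (e / 2 - 1)))ᶜ

/-- Evaluation of a normal-form Borel code of height `m` (alternating ∃/∀ over the
labelling function `f` on tuples, `true` for Σ, `false` for Π). -/
def NFEval : ℕ → Bool → (List ℕ → ℕ) → (ℕ → ℕ) → Prop
  | 0, _, f, x => x ∈ leafSet (f [])
  | m + 1, true, f, x => ∃ t, NFEval m false (fun l => f (t :: l)) x
  | m + 1, false, f, x => ∀ t, NFEval m true (fun l => f (t :: l)) x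

/-!
A `1`-reduced colouring only sees where block `1` of `p` begins, and that is the start of some
nonzero block `a` of `y`; so it amounts to a colouring of the indices `a ≥ 1`, which has an
infinite monochromatic set `X`. Merging the blocks of `y` so that the nonzero blocks of `z` start
exactly at the blocks indexed by `X` gives the required `z`, because every `q ∈ (z)^k` starts its
block `1` at the start of some nonzero block of `z`.

Both coarsenings are of the form `f ∘ y`, with `f 0 = 0` and `f` increasing in steps of at most
one (for `z`, a counting function of `X`); such an `f` preserves orderedness by a discrete
intermediate value argument.
-/

theorem Nat.exists_lt_apply_eq_of_apply_succ_le {f : ℕ → ℕ} (hf : ∀ v, f (v + 1) ≤ f v + 1)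
    {j : ℕ} (h0 : f 0 ≤ j) : ∀ {N}, j < f N → ∃ v < N, f v = j
  | 0, hN => absurd h0 (not_le.mpr hN)
  | N + 1, hN => by
    by_cases hj : j < f N
    · obtain ⟨v, hv, hfv⟩ := Nat.exists_lt_apply_eq_of_apply_succ_le hf h0 hj
      exact ⟨v, by omega, hfv⟩
    · exact ⟨N, by omega, by have := hf N; omega⟩

section mu

variable {x y : ℕ → ℕ} {i : ℕ}

theorem mu_spec (h : ∃ n, x n = i) : x (mu x i) = i :=
  Nat.sInf_mem h

theorem mu_le {n : ℕ} (h : x n = i) : mu x i ≤ n :=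
  Nat.sInf_le h

theorem mu_eq {N : ℕ} (hN : x N = i) (hlb : ∀ n, x n = i → N ≤ n) : mu x i = N :=
  le_antisymm (mu_le hN) (le_csInf ⟨N, hN⟩ hlb)

theorem IsOrderedFn.apply_zero (hy : IsOrderedFn y) : y 0 = 0 := by
  by_contra h
  obtain ⟨m, hm, -⟩ := hy 0 (y 0) rfl 0 (Nat.pos_of_ne_zero h)
  exact Nat.not_lt_zero m hm

theorem IsOrderedFn.mu_le {a n : ℕ} (hy : IsOrderedFn y) (h : a ≤ y n) : mu y a ≤ n := by
  rcases h.eq_or_lt with rfl | hlt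
  · exact _root_.mu_le rfl
  · obtain ⟨m, hm, hym⟩ := hy n (y n) rfl a hlt
    exact (_root_.mu_le hym).trans hm.le

theorem IsOrderedFn.comp {f : ℕ → ℕ} (hy : IsOrderedFn y) (hf0 : f 0 = 0)
    (hf : ∀ v, f (v + 1) ≤ f v + 1) : IsOrderedFn (f ∘ y) := by
  rintro n _ rfl j hj
  obtain ⟨v, hv, rfl⟩ := Nat.exists_lt_apply_eq_of_apply_succ_le hf (hf0.trans_le j.zero_le) hj
  obtain ⟨m, hm, rfl⟩ := hy n (y n) rfl v hv
  exact ⟨m, hm, rfl⟩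

theorem mu_comp {f : ℕ → ℕ} (hy : y ∈ OmegaPartInf) (hj : ∃ u, f u = i) :
    mu (f ∘ y) i = mu y (mu f i) := by
  refine mu_eq ?_ fun n hn => hy.1.mu_le (mu_le hn)
  simp only [Function.comp_apply, mu_spec (hy.2 _), mu_spec hj]

theorem mu_apply_mu_eq_of_coarsens {z q : ℕ → ℕ} (hqz : ∀ n m, z n = z m → q n = q m)
    (hi : ∃ n, q n = i) : mu z (z (mu q i)) = mu q i :=
  mu_eq rfl fun _ hn => mu_le ((hqz _ _ hn).trans (mu_spec hi))

theorem exists_ne_zero_mu_one_eq {z q : ℕ → ℕ} {k : ℕ} (hk : 2 ≤ k) (hz : IsOrderedFn z)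
    (hq : q ∈ Coarsenings z k) : ∃ b ≠ 0, mu q 1 = mu z b := by
  obtain ⟨⟨hqo, -, hqs⟩, hqz⟩ := hq
  have h1 : ∃ n, q n = 1 := hqs 1 (by omega)
  refine ⟨z (mu q 1), fun h0 => ?_, (mu_apply_mu_eq_of_coarsens hqz h1).symm⟩
  have := hqz _ _ (h0.trans hz.apply_zero.symm)
  rw [mu_spec h1, hqo.apply_zero] at this
  exact one_ne_zero this

end mu

section coarsenings

variable {y f : ℕ → ℕ}

theorem coarsenings_subset {z : ℕ → ℕ} {k : ℕ} (hz : z ∈ CoarseningsInf y) :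
    Coarsenings z k ⊆ Coarsenings y k :=
  fun _ ⟨hq, hqz⟩ => ⟨hq, fun n m h => hqz n m (hz.2 n m h)⟩

theorem comp_mem_coarsenings {k : ℕ} (hy : y ∈ OmegaPartInf) (hf0 : f 0 = 0)
    (hf : ∀ v, f (v + 1) ≤ f v + 1) (hfk : ∀ v, f v < k) (hsurj : ∀ i < k, ∃ v, f v = i) :
    f ∘ y ∈ Coarsenings y k := by
  refine ⟨⟨hy.1.comp hf0 hf, fun _ => hfk _, fun i hi => ?_⟩, fun _ _ h => congrArg f h⟩
  obtain ⟨v, rfl⟩ := hsurj i hi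
  obtain ⟨n, rfl⟩ := hy.2 v
  exact ⟨n, rfl⟩

theorem comp_mem_coarseningsInf (hy : y ∈ OmegaPartInf) (hf0 : f 0 = 0)
    (hf : ∀ v, f (v + 1) ≤ f v + 1) (hsurj : Function.Surjective f) :
    f ∘ y ∈ CoarseningsInf y :=
  ⟨⟨hy.1.comp hf0 hf, hsurj.comp hy.2⟩, fun _ _ h => congrArg f h⟩

end coarsenings

/-- Composed with `y`, this merges the blocks of `y` before block `a` into block `0`, makes
block `a` of `y` block `1`, and merges all blocks from `a + k - 2` on into block `k - 1`. -/
def startBlockAt (k a : ℕ) (v : ℕ) : ℕ := min (v + 1 - a) (k - 1)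

section startBlockAt

variable {k a : ℕ}

theorem startBlockAt_comp_mem_coarsenings {y : ℕ → ℕ} (hy : y ∈ OmegaPartInf) (hk : 2 ≤ k)
    (ha : 1 ≤ a) : startBlockAt k a ∘ y ∈ Coarsenings y k := by
  refine comp_mem_coarsenings hy ?_ (fun v => ?_) (fun v => ?_) fun i hi => ?_
  · simp only [startBlockAt]; omega
  · simp only [startBlockAt]; omega
  · simp only [startBlockAt]; omega
  · rcases Nat.eq_zero_or_pos i with rfl | hi0
    · exact ⟨0, by simp only [startBlockAt]; omega⟩
    · exact ⟨a + i - 1, by simp only [startBlockAt]; omega⟩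

theorem mu_startBlockAt_one (hk : 2 ≤ k) : mu (startBlockAt k a) 1 = a :=
  mu_eq (by simp only [startBlockAt]; omega) fun n hn => by simp only [startBlockAt] at hn; omega

end startBlockAt

section count

variable {P : ℕ → Prop} [DecidablePred P]

theorem count_comp_mem_coarseningsInf {y : ℕ → ℕ} (hy : y ∈ OmegaPartInf)
    (hP : {n | P n}.Infinite) : Nat.count P ∘ y ∈ CoarseningsInf y :=
  comp_mem_coarseningsInf hy (Nat.count_zero P) (fun v => by rw [Nat.count_succ]; split <;> omega)
    (Nat.surjective_count_of_infinite_setOfPred hP)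

theorem exists_mu_count_eq_succ {b : ℕ} (hb : ∃ v, Nat.count P v = b) (hb0 : b ≠ 0) :
    ∃ a, P a ∧ mu (Nat.count P) b = a + 1 := by
  have hmu := mu_spec hb
  obtain ⟨a, ha⟩ : ∃ a, mu (Nat.count P) b = a + 1 :=
    Nat.exists_eq_succ_of_ne_zero fun h => hb0 (by rw [← hmu, h, Nat.count_zero])
  refine ⟨a, ?_, ha⟩
  have hlt : Nat.count P a ≠ b := fun h => by have := mu_le h; omega
  rw [ha, Nat.count_succ] at hmu
  by_contra hPa
  rw [if_neg hPa] at hmu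
  exact hlt (by omega)

end count

theorem stmt19_general (k ℓ : ℕ) (hk : 2 ≤ k)
    (y : ℕ → ℕ) (hy : y ∈ OmegaPartInf)
    (C : Fin ℓ → Set (ℕ → ℕ))
    (hcover : Coarsenings y k = ⋃ i, C i)
    (hred : ∀ p ∈ Coarsenings y k, ∀ q ∈ Coarsenings y k,
      mu p 1 = mu q 1 → ∀ i, p ∈ C i ↔ q ∈ C i) :
    ∃ z ∈ CoarseningsInf y, ∃ i : Fin ℓ, Coarsenings z k ⊆ C i := by
  classical
  have hp (a : ℕ) : startBlockAt k (a + 1) ∘ y ∈ Coarsenings y k :=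
    startBlockAt_comp_mem_coarsenings hy hk a.succ_pos
  choose c hc using fun a => mem_iUnion.mp (hcover ▸ hp a)
  obtain ⟨i, hi⟩ := Finite.exists_infinite_fiber c
  have hX : {a | c a = i}.Infinite := infinite_coe_iff.mp hi
  have hz := count_comp_mem_coarseningsInf hy hX
  refine ⟨_, hz, i, fun q hq => ?_⟩
  obtain ⟨b, hb0, hqb⟩ := exists_ne_zero_mu_one_eq hk hz.1.1 hq
  have hb := Nat.surjective_count_of_infinite_setOfPred hX b
  obtain ⟨a, hai, ha⟩ := exists_mu_count_eq_succ hb hb0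
  have hmu : mu q 1 = mu (startBlockAt k (a + 1) ∘ y) 1 := by
    rw [hqb, mu_comp hy hb, ha, mu_comp hy ⟨a + 1, by simp only [startBlockAt]; omega⟩,
      mu_startBlockAt_one hk]
  exact (hred q (coarsenings_subset hz hq) _ (hp a) hmu i).2 (hai ▸ hc a)

/-- the pigeonhole step — a 1-reduced coloring of `(y)^k` has a
homogeneous infinite coarsening of `y`. -/
theorem stmt19 (k ℓ : ℕ) (hk : 2 ≤ k) (hℓ : 2 ≤ ℓ)
    (y : ℕ → ℕ) (hy : y ∈ OmegaPartInf)
    (C : Fin ℓ → Set (ℕ → ℕ))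
    (hcover : Coarsenings y k = ⋃ i, C i)
    (hred : ∀ p ∈ Coarsenings y k, ∀ q ∈ Coarsenings y k,
      mu p 1 = mu q 1 → ∀ i, p ∈ C i ↔ q ∈ C i) :
    ∃ z ∈ CoarseningsInf y, ∃ i : Fin ℓ, Coarsenings z k ⊆ C i :=
  stmt19_general k ℓ hk y hy C hcover hred
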